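/- arXiv:2302.02458 — 5 statements merged into one kernel-verified Lean document; each statement's English description precedes it below -/
import Mathlib

section
/- For all x with 0 < x ≤ π/2, it holds that 1/sin(x) ≤ (1 + (π/2 − 1)(2x/π)²)/x. -/
open Real

/-!
Clearing denominators, the claim is `x π² ≤ (π² + (2π - 4) x²) sin x`, with equality at `x = π/2`.
For `x ≤ 6/5` it already holds with `sin x` replaced by its Taylor lower bound `x - x³/6` at `0`;
for `x ≥ 6/5` it holds with `sin x = cos (π/2 - x)` replaced by the lower bound
`1 - (π/2 - x)²/2` from the expansion at `π/2`. Both are polynomial inequalities in `x` and `π`,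
settled by crude bounds on `π`.
-/

lemma pi_sq_mul_le_mul_sub_cube {x : ℝ} (hx₀ : 0 ≤ x) (hx : x ≤ 6 / 5) :
    x * π ^ 2 ≤ (π ^ 2 + (2 * π - 4) * x ^ 2) * (x - x ^ 3 / 6) := by
  have hπ := pi_gt_three
  have hc : 0 ≤ 114 * (2 * π - 4) - 25 * π ^ 2 := by nlinarith [pi_lt_d2]
  have hx2 : 0 ≤ 36 - 25 * x ^ 2 := by nlinarith
  have ha : 0 ≤ 2 * π - 4 := by linarith
  have key : (π ^ 2 + (2 * π - 4) * x ^ 2) * (x - x ^ 3 / 6) - x * π ^ 2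
      = x ^ 3 / 150 * ((114 * (2 * π - 4) - 25 * π ^ 2) + (2 * π - 4) * (36 - 25 * x ^ 2)) := by
    ring
  rw [← sub_nonneg, key]
  positivity

lemma pi_sq_mul_le_mul_one_sub_sq {x : ℝ} (hx : 6 / 5 ≤ x) (hxπ : x ≤ π / 2) :
    x * π ^ 2 ≤ (π ^ 2 + (2 * π - 4) * x ^ 2) * (1 - (π / 2 - x) ^ 2 / 2) := by
  have hπ₁ := pi_gt_d2
  have hπ₂ := pi_lt_d2
  obtain ⟨s, rfl⟩ : ∃ s, x = π / 2 - s := ⟨π / 2 - x, by ring⟩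
  have hs₀ : 0 ≤ s := by linarith
  have hs : s ≤ 2 / 5 := by linarith
  -- The difference vanishes at `s = 0`; after factoring out `s`, the cubic term is nonnegative
  -- and the linear part is decreasing, so it suffices to check it at `s = 2/5`.
  have key : (π ^ 2 + (2 * π - 4) * (π / 2 - s) ^ 2) * (1 - (π / 2 - (π / 2 - s)) ^ 2 / 2)
      - (π / 2 - s) * π ^ 2
      = s * ((4 * π - π ^ 2) + (2 * π - 4 - π ^ 3 / 4) * s + (π - 2) * (π - s) * s ^ 2) := by
    ring
  have hc₀ : 0 ≤ (4 * π - π ^ 2) + (2 * π - 4 - π ^ 3 / 4) * (2 / 5) := by nlinarith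
  have hc₁ : 2 * π - 4 - π ^ 3 / 4 ≤ 0 := by nlinarith
  have hlin : (2 * π - 4 - π ^ 3 / 4) * (2 / 5) ≤ (2 * π - 4 - π ^ 3 / 4) * s :=
    mul_le_mul_of_nonpos_left hs hc₁
  have hcubic : 0 ≤ (π - 2) * (π - s) * s ^ 2 := by
    have : 0 ≤ π - 2 := by linarith
    have : 0 ≤ π - s := by linarith
    positivity
  rw [← sub_nonneg, key]
  exact mul_nonneg hs₀ (by linarith)

lemma pi_sq_mul_le_mul_sin {x : ℝ} (hx₀ : 0 ≤ x) (hxπ : x ≤ π / 2) :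
    x * π ^ 2 ≤ (π ^ 2 + (2 * π - 4) * x ^ 2) * sin x := by
  have hq : 0 ≤ π ^ 2 + (2 * π - 4) * x ^ 2 := by nlinarith [pi_gt_three]
  rcases le_total x (6 / 5) with hx | hx
  · exact (pi_sq_mul_le_mul_sub_cube hx₀ hx).trans
      (mul_le_mul_of_nonneg_left (sin_ge_sub_cube hx₀) hq)
  · have hsin : 1 - (π / 2 - x) ^ 2 / 2 ≤ sin x := by
      simpa only [cos_pi_div_two_sub] using one_sub_sq_div_two_le_cos (x := π / 2 - x)
    exact (pi_sq_mul_le_mul_one_sub_sq hx hxπ).trans (mul_le_mul_of_nonneg_left hsin hq)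

/-- For `0 < x ≤ π/2`, `1/sin(x) ≤ (1 + (π/2 − 1)(2x/π)²)/x`. -/
theorem one_div_sin_bound (x : ℝ) (hx0 : 0 < x) (hx : x ≤ Real.pi / 2) :
    1 / Real.sin x ≤ (1 + (Real.pi / 2 - 1) * (2 * x / Real.pi) ^ 2) / x := by
  have hsin : 0 < sin x := sin_pos_of_pos_of_lt_pi hx0 (by linarith [pi_pos])
  have hrhs : 1 + (π / 2 - 1) * (2 * x / π) ^ 2 = (π ^ 2 + (2 * π - 4) * x ^ 2) / π ^ 2 := by
    field_simp
    ring
  rw [div_le_div_iff₀ hsin hx0, hrhs, one_mul, div_mul_eq_mul_div, le_div_iff₀ (by positivity)]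
  exact pi_sq_mul_le_mul_sin hx0.le hx
end

section
/- For a positive integer n and integers 1 ≤ r, s ≤ n, define ζ_{r,s} = −(2/(n+1)) ∑_{k=1}^{n} [sin(krπ/(n+1)) sin(ksπ/(n+1))] / [2(1 − cos(kπ/(n+1)))]. Then ζ_{r,s} = −((n+1) min(r,s) − r s)/(n+1). -/
/-!
As functions of `r ∈ {0, …, n + 1}`, both sides solve the discrete Dirichlet problem
`u 0 = u (n + 1) = 0`, `u r - 2 u (r + 1) + u (r + 2) = δ_{r+1,s}`. For the spectral sum this is
because `r ↦ sin (k r π / (n + 1))` is an eigenvector of the second difference with eigenvalue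
`-2 (1 - cos (k π / (n + 1)))`, vanishing at both ends, combined with the orthogonality of these
eigenvectors; for `-(min r s - r s / (n + 1))` it is a direct computation. The difference of the two
sides has vanishing second differences, so it is affine in `r`, and it vanishes at both ends.
-/

open Real Finset

def secondDiff (u : ℕ → ℝ) (r : ℕ) : ℝ := u r - 2 * u (r + 1) + u (r + 2)

lemma secondDiff_sub (u v : ℕ → ℝ) (r : ℕ) :
    secondDiff (fun r ↦ u r - v r) r = secondDiff u r - secondDiff v r := by
  simp only [secondDiff]; ring

lemma secondDiff_mul_const (u : ℕ → ℝ) (c : ℝ) (r : ℕ) :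
    secondDiff (fun r ↦ u r * c) r = secondDiff u r * c := by
  simp only [secondDiff]; ring

lemma secondDiff_const_mul_sum {ι : Type*} (t : Finset ι) (c : ℝ) (f : ι → ℕ → ℝ) (r : ℕ) :
    secondDiff (fun r ↦ c * ∑ k ∈ t, f k r) r = c * ∑ k ∈ t, secondDiff (f k) r := by
  simp only [secondDiff, mul_sum, mul_add, mul_sub, sum_add_distrib, sum_sub_distrib]
  ring_nf

lemma eq_nat_mul_of_secondDiff_eq_zero {u : ℕ → ℝ} {N : ℕ} (h0 : u 0 = 0)
    (hu : ∀ r, r + 2 ≤ N → secondDiff u r = 0) {r : ℕ} (hr : r + 1 ≤ N) :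
    u r = r * u 1 ∧ u (r + 1) = (r + 1) * u 1 := by
  induction r with
  | zero => simp [h0]
  | succ r ih =>
    obtain ⟨hr0, hr1⟩ := ih (by omega)
    have h := hu r hr
    unfold secondDiff at h
    push_cast
    constructor <;> linarith

lemma eq_zero_of_secondDiff_eq_zero {u : ℕ → ℝ} {N : ℕ} (h0 : u 0 = 0) (hN : u N = 0)
    (hu : ∀ r, r + 2 ≤ N → secondDiff u r = 0) {r : ℕ} (hr : r ≤ N) : u r = 0 := by
  rcases N.eq_zero_or_pos with rfl | hNpos
  · rwa [Nat.le_zero.1 hr]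
  have hslope : u 1 = 0 := by
    have h := (eq_nat_mul_of_secondDiff_eq_zero h0 hu (r := N - 1) (by omega)).2
    rw [Nat.sub_add_cancel hNpos, hN] at h
    have hN1 : ((N - 1 : ℕ) : ℝ) + 1 ≠ 0 := by positivity
    exact (mul_eq_zero.1 h.symm).resolve_left hN1
  rcases hr.lt_or_eq with hr | rfl
  · rw [(eq_nat_mul_of_secondDiff_eq_zero h0 hu hr).1, hslope, mul_zero]
  · exact hN

lemma secondDiff_min (s r : ℕ) :
    secondDiff (fun r ↦ (min r s : ℝ)) r = -if r + 1 = s then 1 else 0 := by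
  have h : min r s + min (r + 2) s + (if r + 1 = s then 1 else 0) = 2 * min (r + 1) s := by
    split_ifs <;> omega
  have h' := congrArg (Nat.cast (R := ℝ)) h
  simp only [secondDiff]
  push_cast at h' ⊢
  split_ifs at h' ⊢ <;> linarith

lemma secondDiff_sin_mul (x : ℝ) (r : ℕ) :
    secondDiff (fun r : ℕ ↦ sin (r * x)) r = -2 * (1 - cos x) * sin ((r + 1) * x) := by
  simp only [secondDiff]
  push_cast
  rw [show (r : ℝ) * x = (r + 1) * x - x by ring, show ((r : ℝ) + 2) * x = (r + 1) * x + x by ring,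
    sin_sub, sin_add]
  ring

lemma two_mul_sin_half_mul_sum_Icc_cos (n : ℕ) (x : ℝ) :
    2 * sin (x / 2) * ∑ k ∈ Icc 1 n, cos (k * x) = sin ((n + 1 / 2) * x) - sin (x / 2) := by
  induction n with
  | zero => rw [Icc_eq_empty (by omega), sum_empty, Nat.cast_zero, zero_add, one_div_mul_eq_div]; ring
  | succ n ih =>
    rw [sum_Icc_succ_top (by omega), mul_add, ih, two_mul_sin_mul_cos,
      show x / 2 - (n + 1 : ℕ) * x = -((n + 1 / 2) * x) by push_cast; ring,
      show x / 2 + (n + 1 : ℕ) * x = (((n + 1 : ℕ) : ℝ) + 1 / 2) * x by push_cast; ring, sin_neg]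
    ring

lemma sin_int_mul_pi_div_ne_zero {N : ℕ} {j : ℤ} (hj : j ≠ 0) (hjN : |j| < N) :
    sin (j * π / N) ≠ 0 := by
  intro h
  obtain ⟨m, hm⟩ := sin_eq_zero_iff.1 h
  have hN : (N : ℝ) ≠ 0 := by
    have : (0 : ℤ) < N := (abs_nonneg j).trans_lt hjN
    exact_mod_cast this.ne'
  have hmj : m * (N : ℤ) = j := by
    have : (m : ℝ) * N = j := by field_simp at hm; linarith
    exact_mod_cast this
  rcases eq_or_ne m 0 with rfl | hm0
  · exact hj (by simpa using hmj.symm)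
  · have : (N : ℤ) ≤ |j| := by
      rw [← hmj, abs_mul, abs_of_nonneg (by positivity : (0 : ℤ) ≤ N)]
      exact le_mul_of_one_le_left (by positivity) (Int.one_le_abs hm0)
    omega

lemma sum_Icc_cos_int_mul_pi_div (n : ℕ) {j : ℤ} (hj : j ≠ 0) (hjn : |j| < 2 * (n + 1)) :
    ∑ k ∈ Icc 1 n, cos (k * (j * π / (n + 1))) = -(1 + cos (j * π)) / 2 := by
  set x := j * π / (n + 1)
  have hsin : sin (x / 2) ≠ 0 := by
    convert sin_int_mul_pi_div_ne_zero (N := 2 * (n + 1)) hj (by push_cast; exact hjn) using 2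
    simp only [x]; push_cast; field_simp
  have hend : (n + 1 / 2) * x = j * π - x / 2 := by
    simp only [x]; field_simp; ring
  have h := two_mul_sin_half_mul_sum_Icc_cos n x
  rw [hend, sin_sub, sin_int_mul_pi] at h
  apply mul_left_cancel₀ (mul_ne_zero two_ne_zero hsin)
  rw [h]; ring

lemma sum_Icc_sin_mul_sin {n r s : ℕ} (hr1 : 1 ≤ r) (hrn : r ≤ n) (hs1 : 1 ≤ s) (hsn : s ≤ n) :
    ∑ k ∈ Icc 1 n, sin (k * r * π / (n + 1)) * sin (k * s * π / (n + 1)) =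
      if r = s then ((n : ℝ) + 1) / 2 else 0 := by
  have hprod : ∀ k : ℕ, sin (k * r * π / (n + 1)) * sin (k * s * π / (n + 1)) =
      (cos (k * (((r - s : ℤ) : ℝ) * π / (n + 1))) -
        cos (k * (((r + s : ℤ) : ℝ) * π / (n + 1)))) / 2 := by
    intro k
    rw [eq_div_iff two_ne_zero, mul_comm, ← mul_assoc, two_mul_sin_mul_sin]
    push_cast; ring_nf
  simp only [hprod, ← sum_div, sum_sub_distrib]
  rw [sum_Icc_cos_int_mul_pi_div n (j := r + s) (by omega)
    (by rw [abs_of_nonneg (by omega)]; omega)]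
  split_ifs with hrs
  · subst hrs
    rw [show ((r + r : ℤ) : ℝ) * π = (r : ℤ) * (2 * π) by push_cast; ring, cos_int_mul_two_pi]
    simp
  · rw [sum_Icc_cos_int_mul_pi_div n (j := r - s) (by omega) (by rw [abs_lt]; omega),
      show ((r + s : ℤ) : ℝ) * π = ((r - s : ℤ) : ℝ) * π + (s : ℤ) * (2 * π) by push_cast; ring,
      cos_add_int_mul_two_pi]
    ring

lemma one_sub_cos_mul_pi_div_ne_zero {n k : ℕ} (hk1 : 1 ≤ k) (hkn : k ≤ n) :
    1 - cos (k * π / (n + 1)) ≠ 0 := by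
  have hk : (0 : ℝ) < k := by exact_mod_cast hk1
  have hkn' : (k : ℝ) < 2 * (n + 1) := by
    have : (k : ℝ) ≤ n := by exact_mod_cast hkn
    linarith
  rw [sub_ne_zero, ne_comm, Ne, cos_eq_one_iff_of_lt_of_lt]
  · positivity
  · have : 0 < k * π / (n + 1) := by positivity
    linarith [pi_pos]
  · rw [div_lt_iff₀ (by positivity)]
    nlinarith [pi_pos]

noncomputable def susceptibility (n r s : ℕ) : ℝ :=
  -(2 / ((n : ℝ) + 1)) * ∑ k ∈ Icc 1 n,
    sin (k * r * π / (n + 1)) * sin (k * s * π / (n + 1)) / (2 * (1 - cos (k * π / (n + 1))))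

noncomputable def pathGreen (n r s : ℕ) : ℝ :=
  -(((n : ℝ) + 1) * (min r s : ℝ) - (r : ℝ) * s) / (n + 1)

lemma susceptibility_zero_left (n s : ℕ) : susceptibility n 0 s = 0 := by
  simp [susceptibility]

lemma susceptibility_succ_self_left (n s : ℕ) : susceptibility n (n + 1) s = 0 := by
  have hsin : ∀ k : ℕ, sin (k * ((n + 1 : ℕ) : ℝ) * π / (n + 1)) = 0 := by
    intro k
    rw [show k * ((n + 1 : ℕ) : ℝ) * π / (n + 1) = k * π by push_cast; field_simp]
    exact sin_nat_mul_pi k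
  simp only [susceptibility, hsin, zero_mul, zero_div, sum_const_zero, mul_zero]

lemma secondDiff_susceptibility {n r s : ℕ} (hr : r + 2 ≤ n + 1) (hs1 : 1 ≤ s) (hsn : s ≤ n) :
    secondDiff (fun r ↦ susceptibility n r s) r = if r + 1 = s then 1 else 0 := by
  have hterm : ∀ k ∈ Icc 1 n,
      secondDiff (fun r ↦ sin (k * r * π / (n + 1)) * sin (k * s * π / (n + 1)) /
        (2 * (1 - cos (k * π / (n + 1))))) r =
      -(sin (k * (r + 1 : ℕ) * π / (n + 1)) * sin (k * s * π / (n + 1))) := by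
    intro k hk
    have hcos := one_sub_cos_mul_pi_div_ne_zero (mem_Icc.1 hk).1 (mem_Icc.1 hk).2
    have hmode : (fun r : ℕ ↦ sin (k * r * π / (n + 1)) * sin (k * s * π / (n + 1)) /
        (2 * (1 - cos (k * π / (n + 1))))) = fun r : ℕ ↦ sin (r * (k * π / (n + 1))) *
          (sin (k * s * π / (n + 1)) / (2 * (1 - cos (k * π / (n + 1))))) := by
      ext r; ring_nf
    rw [hmode, secondDiff_mul_const, secondDiff_sin_mul,
      show ((r : ℝ) + 1) * (k * π / (n + 1)) = k * (r + 1 : ℕ) * π / (n + 1) by push_cast; ring]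
    field_simp
  simp only [susceptibility]
  rw [secondDiff_const_mul_sum, sum_congr rfl hterm, sum_neg_distrib,
    sum_Icc_sin_mul_sin (by omega) (by omega) hs1 hsn]
  split_ifs
  · field_simp
  · simp

lemma pathGreen_zero_left (n s : ℕ) : pathGreen n 0 s = 0 := by
  simp [pathGreen]

lemma pathGreen_succ_self_left {n s : ℕ} (hs : s ≤ n + 1) : pathGreen n (n + 1) s = 0 := by
  have hs' : (s : ℝ) ≤ n + 1 := by exact_mod_cast hs
  simp only [pathGreen, Nat.cast_add, Nat.cast_one, min_eq_right hs', sub_self, neg_zero, zero_div]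

lemma secondDiff_pathGreen (n r s : ℕ) :
    secondDiff (fun r ↦ pathGreen n r s) r = if r + 1 = s then 1 else 0 := by
  have h := secondDiff_min s r
  have hG : ∀ r, pathGreen n r s = r * s / (n + 1) - min r s := by
    intro r
    have hn : (n : ℝ) + 1 ≠ 0 := by positivity
    simp only [pathGreen]
    push_cast
    field_simp
    ring
  simp only [secondDiff, hG] at h ⊢
  push_cast at h ⊢
  split_ifs at h ⊢ <;> linear_combination -h

theorem susceptibility_closed_form_general (n r s : ℕ) (hrn : r ≤ n) (hs1 : 1 ≤ s) (hsn : s ≤ n) :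
    -(2 / ((n : ℝ) + 1)) * ∑ k ∈ Finset.Icc 1 n,
        Real.sin (k * r * Real.pi / (n + 1)) * Real.sin (k * s * Real.pi / (n + 1)) /
          (2 * (1 - Real.cos (k * Real.pi / (n + 1)))) =
      -(((n : ℝ) + 1) * (min r s : ℝ) - (r : ℝ) * s) / (n + 1) := by
  show susceptibility n r s = pathGreen n r s
  have hsolves : ∀ r, r + 2 ≤ n + 1 →
      secondDiff (fun r ↦ susceptibility n r s - pathGreen n r s) r = 0 := by
    intro r hr
    rw [secondDiff_sub, secondDiff_susceptibility hr hs1 hsn, secondDiff_pathGreen, sub_self]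
  refine sub_eq_zero.1 (eq_zero_of_secondDiff_eq_zero ?_ ?_ hsolves (by omega : r ≤ n + 1))
  · rw [susceptibility_zero_left, pathGreen_zero_left, sub_self]
  · rw [susceptibility_succ_self_left, pathGreen_succ_self_left (by omega), sub_self]

/-- Closed form of the harmonic-chain susceptibility:
`ζ_{r,s} = −(2/(n+1)) ∑_{k=1}^{n} sin(krπ/(n+1)) sin(ksπ/(n+1)) / (2(1 − cos(kπ/(n+1))))`
equals `−((n+1) min(r,s) − rs)/(n+1)` for `1 ≤ r, s ≤ n`. -/
theorem susceptibility_closed_form (n r s : ℕ) (hn : 0 < n)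
    (hr1 : 1 ≤ r) (hrn : r ≤ n) (hs1 : 1 ≤ s) (hsn : s ≤ n) :
    -(2 / ((n : ℝ) + 1)) * ∑ k ∈ Finset.Icc 1 n,
        Real.sin (k * r * Real.pi / (n + 1)) * Real.sin (k * s * Real.pi / (n + 1)) /
          (2 * (1 - Real.cos (k * Real.pi / (n + 1)))) =
      -(((n : ℝ) + 1) * (min r s : ℝ) - (r : ℝ) * s) / (n + 1) :=
  susceptibility_closed_form_general n r s hrn hs1 hsn
end

section
/- For every positive integer n and real J with 0 ≤ J ≤ 1, F⁻¹ := exp( (J²/(4(n+1))) ∑_{k=1}^{n} cos²(kπ/(2(n+1)))/sin(kπ/(2(n+1))) ) satisfies n^{J²/(2π)} e^{−J²/6} ≤ F⁻¹ ≤ n^{J²/4} e^{J²/8}. -/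
open Real Finset

/-!
Write `N = n + 1` and `θₖ = kπ/(2N)`. Since `cos² θ / sin θ = 1 / sin θ - sin θ`, the sum splits.
Jordan's inequality `2θ/π ≤ sin θ ≤ θ` puts `1 / sin θₖ` between `2N/(πk)` and `N/k`, so the main
part is controlled by the harmonic number `Hₙ`, which lies between `log n` and
`log n + 3/2 - log 2` because `Hₙ - log n` decreases. The correction `∑ sin θₖ` is at least
`∑ k/N = n/2`, and at most `cot δ / 2 ≤ 2N/π` with `δ = π/(4N)`: the identity
`2 sin δ sin 2kδ = cos (2k-1)δ - cos (2k+1)δ` makes `2 sin δ ∑ sin θₖ` telescope to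
`cos δ - sin δ`.
-/

lemma log_le_harmonic (n : ℕ) : log n ≤ harmonic n := by
  rcases n.eq_zero_or_pos with rfl | hn
  · simp
  · calc log n ≤ log ↑(n + 1) := log_le_log (by positivity) (by push_cast; linarith)
      _ ≤ harmonic n := log_add_one_le_harmonic n

lemma harmonic_sub_log_le {n : ℕ} (hn : 2 ≤ n) : (harmonic n : ℝ) - log n ≤ 3 / 2 - log 2 := by
  have h := strictAnti_eulerMascheroniSeq'.antitone hn
  have h2 : (harmonic 2 : ℝ) = 3 / 2 := by norm_num [harmonic]
  simp only [eulerMascheroniSeq', if_neg (show n ≠ 0 by omega), OfNat.ofNat_ne_zero, if_false,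
    h2, Nat.cast_ofNat] at h
  linarith

lemma sum_Icc_natCast (n : ℕ) : ∑ k ∈ Icc 1 n, (k : ℝ) = n * (n + 1) / 2 := by
  induction n with
  | zero => simp
  | succ n ih =>
    rw [sum_Icc_succ_top (by omega), ih]
    push_cast
    ring

lemma sum_Icc_inv_natCast (n : ℕ) : ∑ k ∈ Icc 1 n, (k : ℝ)⁻¹ = harmonic n := by
  simp [harmonic_eq_sum_Icc]

lemma two_mul_sin_mul_sum_sin (δ : ℝ) (n : ℕ) :
    2 * sin δ * ∑ k ∈ Icc 1 n, sin (2 * k * δ) = cos δ - cos ((2 * n + 1) * δ) := by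
  induction n with
  | zero => simp
  | succ n ih =>
    have hsub : δ - 2 * ((n + 1 : ℕ) : ℝ) * δ = -((2 * n + 1) * δ) := by push_cast; ring
    rw [sum_Icc_succ_top (by omega), mul_add, ih, two_mul_sin_mul_sin, hsub, cos_neg]
    push_cast
    ring_nf

lemma cos_sq_div_sin (x : ℝ) (hx : sin x ≠ 0) : cos x ^ 2 / sin x = (sin x)⁻¹ - sin x := by
  rw [cos_sq', div_eq_iff hx, sub_mul, inv_mul_cancel₀ hx]
  ring

noncomputable def gridAngle (n k : ℕ) : ℝ := k * π / (2 * (n + 1))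

section gridAngle

variable {n k : ℕ}

lemma gridAngle_pos (hk : 1 ≤ k) : 0 < gridAngle n k := by
  unfold gridAngle
  have : (1 : ℝ) ≤ k := by exact_mod_cast hk
  positivity

lemma gridAngle_le_pi_div_two (hk : k ≤ n + 1) : gridAngle n k ≤ π / 2 := by
  have : (k : ℝ) ≤ n + 1 := by exact_mod_cast hk
  rw [gridAngle, div_le_div_iff₀ (by positivity) two_pos]
  nlinarith [pi_pos]

lemma gridAngle_lt_pi_div_two (hk : k ≤ n) : gridAngle n k < π / 2 := by
  have : (k : ℝ) < n + 1 := by norm_cast; omega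
  rw [gridAngle, div_lt_div_iff₀ (by positivity) two_pos]
  nlinarith [pi_pos]

lemma sin_gridAngle_pos (hk₁ : 1 ≤ k) (hk : k ≤ n) : 0 < sin (gridAngle n k) :=
  sin_pos_of_pos_of_lt_pi (gridAngle_pos hk₁) (by linarith [gridAngle_lt_pi_div_two hk, pi_pos])

lemma div_le_sin_gridAngle (hk : k ≤ n + 1) : k / (n + 1 : ℝ) ≤ sin (gridAngle n k) := by
  have h := mul_le_sin (by unfold gridAngle; positivity) (gridAngle_le_pi_div_two hk)
  convert h using 1
  unfold gridAngle
  field_simp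

end gridAngle

lemma sum_sin_gridAngle_le (n : ℕ) : ∑ k ∈ Icc 1 n, sin (gridAngle n k) ≤ 2 * (n + 1) / π := by
  obtain ⟨δ, hδ⟩ : ∃ δ : ℝ, δ = π / (4 * (n + 1)) := ⟨_, rfl⟩
  have hδ₀ : 0 < δ := by rw [hδ]; positivity
  have hδ₁ : δ < π / 2 := by
    rw [hδ, div_lt_div_iff₀ (by positivity) two_pos]
    nlinarith [pi_pos, (n.cast_nonneg : (0 : ℝ) ≤ n)]
  have hcos : 0 < cos δ := cos_pos_of_mem_Ioo ⟨by linarith, hδ₁⟩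
  have htel : 2 * sin δ * ∑ k ∈ Icc 1 n, sin (gridAngle n k) ≤ cos δ := by
    have hgrid : ∀ k : ℕ, gridAngle n k = 2 * k * δ := fun k ↦ by
      rw [gridAngle, hδ]; field_simp; ring
    have hlast : 0 ≤ cos ((2 * n + 1) * δ) := cos_nonneg_of_mem_Icc ⟨by nlinarith, by
      rw [hδ]; field_simp; nlinarith [pi_pos]⟩
    simp only [hgrid]
    linarith [two_mul_sin_mul_sum_sin δ n]
  have htan : δ * cos δ ≤ sin δ := by
    have := le_tan hδ₀.le hδ₁
    rwa [tan_eq_sin_div_cos, le_div_iff₀ hcos] at this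
  have hT : 0 ≤ ∑ k ∈ Icc 1 n, sin (gridAngle n k) :=
    sum_nonneg fun k hk ↦ (sin_gridAngle_pos (mem_Icc.1 hk).1 (mem_Icc.1 hk).2).le
  generalize ∑ k ∈ Icc 1 n, sin (gridAngle n k) = T at htel hT ⊢
  have hδT : 2 * δ * T ≤ 1 := by
    refine le_of_mul_le_mul_right ?_ hcos
    calc 2 * δ * T * cos δ = 2 * T * (δ * cos δ) := by ring
      _ ≤ 2 * T * sin δ := by gcongr
      _ ≤ 1 * cos δ := by linarith
  rw [hδ] at hδT
  rw [le_div_iff₀ pi_pos]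
  field_simp at hδT
  linarith

noncomputable def overlapSum (n : ℕ) : ℝ :=
  ∑ k ∈ Icc 1 n, cos (gridAngle n k) ^ 2 / sin (gridAngle n k)

lemma overlapSum_eq_sum_inv_sin_sub_sin (n : ℕ) :
    overlapSum n = ∑ k ∈ Icc 1 n, ((sin (gridAngle n k))⁻¹ - sin (gridAngle n k)) :=
  sum_congr rfl fun _ hk ↦
    cos_sq_div_sin _ (sin_gridAngle_pos (mem_Icc.1 hk).1 (mem_Icc.1 hk).2).ne'

lemma overlapSum_le (n : ℕ) : overlapSum n ≤ (n + 1) * harmonic n - n / 2 := by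
  calc overlapSum n ≤ ∑ k ∈ Icc 1 n, ((n + 1) * (k : ℝ)⁻¹ - k / (n + 1)) := by
        rw [overlapSum_eq_sum_inv_sin_sub_sin]
        refine sum_le_sum fun k hk ↦ ?_
        have hk₀ : (0 : ℝ) < k := by exact_mod_cast (mem_Icc.1 hk).1
        have hsin := div_le_sin_gridAngle (n := n) (k := k) (by have := (mem_Icc.1 hk).2; omega)
        have hinv : (sin (gridAngle n k))⁻¹ ≤ (n + 1) * (k : ℝ)⁻¹ := by
          calc _ ≤ ((k : ℝ) / (n + 1))⁻¹ := inv_anti₀ (by positivity) hsin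
            _ = _ := by rw [inv_div, div_eq_mul_inv]
        linarith
    _ = (n + 1) * harmonic n - n / 2 := by
        rw [sum_sub_distrib, ← mul_sum, ← sum_div, sum_Icc_inv_natCast, sum_Icc_natCast]
        field_simp

lemma le_overlapSum (n : ℕ) : 2 * (n + 1) / π * (harmonic n - 1) ≤ overlapSum n := by
  calc 2 * (n + 1) / π * (harmonic n - 1)
      ≤ ∑ k ∈ Icc 1 n, 2 * (n + 1) / π * (k : ℝ)⁻¹ - ∑ k ∈ Icc 1 n, sin (gridAngle n k) := by
        rw [← mul_sum, sum_Icc_inv_natCast, mul_sub, mul_one]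
        linarith [sum_sin_gridAngle_le n]
    _ ≤ overlapSum n := by
        rw [overlapSum_eq_sum_inv_sin_sub_sin, sum_sub_distrib]
        refine sub_le_sub (sum_le_sum fun k hk ↦ ?_) le_rfl
        have hk₁ := (mem_Icc.1 hk).1
        calc 2 * (n + 1) / π * (k : ℝ)⁻¹ = (gridAngle n k)⁻¹ := by
              rw [gridAngle]; field_simp
          _ ≤ (sin (gridAngle n k))⁻¹ :=
              inv_anti₀ (sin_gridAngle_pos hk₁ (mem_Icc.1 hk).2) (sin_le (gridAngle_pos hk₁).le)

lemma log_div_pi_sub_le_overlapSum_div (n : ℕ) :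
    log n / π - 1 / 3 ≤ overlapSum n / (2 * (n + 1)) := by
  have hπ : 1 / π ≤ 1 / 3 := one_div_le_one_div_of_le (by norm_num) pi_gt_three.le
  rw [le_div_iff₀ (by positivity)]
  calc (log n / π - 1 / 3) * (2 * (n + 1)) ≤ 2 * (n + 1) * (log n / π - 1 / π) := by
        nlinarith
    _ ≤ 2 * (n + 1) / π * (harmonic n - 1) := by
        rw [← sub_div, mul_div_assoc', div_mul_eq_mul_div]
        gcongr
        exact log_le_harmonic n
    _ ≤ overlapSum n := le_overlapSum n

lemma overlapSum_div_le {n : ℕ} (hn : 2 ≤ n) :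
    overlapSum n / (2 * (n + 1)) ≤ log n / 2 + 1 / 4 := by
  have h := overlapSum_le n
  have hH := harmonic_sub_log_le hn
  have hlog2 := log_two_gt_d9
  have hn' : (2 : ℝ) ≤ n := by exact_mod_cast hn
  rw [div_le_iff₀ (by positivity)]
  nlinarith

theorem inverse_overlap_bounds_general (n : ℕ) (hn : 2 ≤ n) (J : ℝ) :
    (n : ℝ) ^ (J ^ 2 / (2 * Real.pi)) * Real.exp (-J ^ 2 / 6) ≤
      Real.exp ((J ^ 2 / (4 * ((n : ℝ) + 1))) * ∑ k ∈ Finset.Icc 1 n,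
        Real.cos (k * Real.pi / (2 * (n + 1))) ^ 2 / Real.sin (k * Real.pi / (2 * (n + 1)))) ∧
    Real.exp ((J ^ 2 / (4 * ((n : ℝ) + 1))) * ∑ k ∈ Finset.Icc 1 n,
        Real.cos (k * Real.pi / (2 * (n + 1))) ^ 2 / Real.sin (k * Real.pi / (2 * (n + 1)))) ≤
      (n : ℝ) ^ (J ^ 2 / 4) * Real.exp (J ^ 2 / 8) := by
  have hn₀ : (0 : ℝ) < n := Nat.cast_pos.2 (by omega)
  have hexponent : J ^ 2 / (4 * ((n : ℝ) + 1)) * overlapSum n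
      = J ^ 2 / 2 * (overlapSum n / (2 * (n + 1))) := by
    field_simp
    ring
  have hsum : ∑ k ∈ Icc 1 n, cos (k * π / (2 * (n + 1))) ^ 2 / sin (k * π / (2 * (n + 1)))
      = overlapSum n := rfl
  rw [hsum, hexponent]
  refine ⟨?_, ?_⟩
  · calc (n : ℝ) ^ (J ^ 2 / (2 * π)) * exp (-J ^ 2 / 6)
        = exp (J ^ 2 / 2 * (log n / π - 1 / 3)) := by
          rw [rpow_def_of_pos hn₀, ← exp_add]; congr 1; field_simp; ring
      _ ≤ _ := by gcongr; exact log_div_pi_sub_le_overlapSum_div n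
  · calc _ ≤ exp (J ^ 2 / 2 * (log n / 2 + 1 / 4)) := by gcongr; exact overlapSum_div_le hn
      _ = (n : ℝ) ^ (J ^ 2 / 4) * exp (J ^ 2 / 8) := by
          rw [rpow_def_of_pos hn₀, ← exp_add]; congr 1; ring

/-- Bounds on the inverse overlap of the transmission-line gadget:
`n^{J²/(2π)} e^{−J²/6} ≤ F⁻¹ ≤ n^{J²/4} e^{J²/8}` where
`F⁻¹ = exp((J²/(4(n+1))) ∑_{k=1}^{n} cos²(kπ/(2(n+1)))/sin(kπ/(2(n+1))))`. -/
theorem inverse_overlap_bounds (n : ℕ) (hn : 2 ≤ n) (J : ℝ) (hJ0 : 0 ≤ J) (hJ1 : J ≤ 1) :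
    (n : ℝ) ^ (J ^ 2 / (2 * Real.pi)) * Real.exp (-J ^ 2 / 6) ≤
      Real.exp ((J ^ 2 / (4 * ((n : ℝ) + 1))) * ∑ k ∈ Finset.Icc 1 n,
        Real.cos (k * Real.pi / (2 * (n + 1))) ^ 2 / Real.sin (k * Real.pi / (2 * (n + 1)))) ∧
    Real.exp ((J ^ 2 / (4 * ((n : ℝ) + 1))) * ∑ k ∈ Finset.Icc 1 n,
        Real.cos (k * Real.pi / (2 * (n + 1))) ^ 2 / Real.sin (k * Real.pi / (2 * (n + 1)))) ≤
      (n : ℝ) ^ (J ^ 2 / 4) * Real.exp (J ^ 2 / 8) :=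
  inverse_overlap_bounds_general n hn J
end

section
/- For every positive integer n and every integer r with 1 ≤ r ≤ n, the sum ∑_{k=1}^{n} g_k^{r2} with g_k^r = sin(krπ/(n+1)) / sqrt((n+1) · 2 sin(kπ/(2(n+1)))) satisfies ∑_{k=1}^{n} (g_k^r)² ≤ (1/2)(1 + ln n). -/
open Real Finset

/-! Bounding `sin² ≤ 1` in each numerator and using Jordan's inequality `sin x ≥ 2x/π` on
`[0, π/2]` in each denominator, the `k`-th term is at most `1/(2k)`; the sum is then at most
half the harmonic number `H_n ≤ 1 + ln n`. -/

lemma le_mul_sin_mul_pi_div_two_mul {k m : ℝ} (hm : 0 < m) (hk0 : 0 ≤ k) (hkm : k ≤ m) :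
    k ≤ m * sin (k * π / (2 * m)) := by
  have hx0 : 0 ≤ k * π / (2 * m) := by positivity
  have hxpi : k * π / (2 * m) ≤ π / 2 := by
    rw [div_le_div_iff₀ (by positivity) two_pos]
    nlinarith [pi_pos]
  have hjordan := mul_le_sin hx0 hxpi
  have hrescale : 2 / π * (k * π / (2 * m)) = k / m := by field_simp
  rw [hrescale, div_le_iff₀ hm] at hjordan
  linarith

lemma sq_sin_div_two_mul_sin_le {k m : ℝ} (θ : ℝ) (hk : 0 < k) (hkm : k ≤ m) :
    sin θ ^ 2 / (2 * m * sin (k * π / (2 * m))) ≤ 1 / (2 * k) := by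
  have hden : 2 * k ≤ 2 * m * sin (k * π / (2 * m)) := by
    nlinarith [le_mul_sin_mul_pi_div_two_mul (hk.trans_le hkm) hk.le hkm]
  calc sin θ ^ 2 / (2 * m * sin (k * π / (2 * m)))
      ≤ 1 / (2 * m * sin (k * π / (2 * m))) := by
        gcongr
        · linarith
        · exact sin_sq_le_one θ
    _ ≤ 1 / (2 * k) := one_div_le_one_div_of_le (by positivity) hden

lemma sum_Icc_one_div_two_mul_eq_half_harmonic (n : ℕ) :
    ∑ k ∈ Icc 1 n, 1 / (2 * (k : ℝ)) = 1 / 2 * harmonic n := by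
  rw [harmonic_eq_sum_Icc, Rat.cast_sum, mul_sum]
  refine sum_congr rfl fun k _ => ?_
  push_cast
  ring

theorem coupling_sum_bound_general (n r : ℕ) :
    ∑ k ∈ Finset.Icc 1 n,
        Real.sin (k * r * Real.pi / (n + 1)) ^ 2 /
          (2 * ((n : ℝ) + 1) * Real.sin (k * Real.pi / (2 * (n + 1)))) ≤
      (1 / 2) * (1 + Real.log n) := by
  calc _ ≤ ∑ k ∈ Icc 1 n, 1 / (2 * (k : ℝ)) := by
        refine sum_le_sum fun k hk => ?_
        obtain ⟨hk1, hkn⟩ := mem_Icc.mp hk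
        exact sq_sin_div_two_mul_sin_le _ (by exact_mod_cast hk1) (by norm_cast; omega)
    _ = 1 / 2 * harmonic n := sum_Icc_one_div_two_mul_eq_half_harmonic n
    _ ≤ 1 / 2 * (1 + log n) := by gcongr; exact harmonic_le_one_add_log n

/-- `∑_{k=1}^{n} (g_k^r)² ≤ (1/2)(1 + ln n)` where
`g_k^r = sin(krπ/(n+1)) / √(2(n+1) sin(kπ/(2(n+1))))`. -/
theorem coupling_sum_bound (n r : ℕ) (hn : 1 ≤ n) (hr1 : 1 ≤ r) (hrn : r ≤ n) :
    ∑ k ∈ Finset.Icc 1 n,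
        Real.sin (k * r * Real.pi / (n + 1)) ^ 2 /
          (2 * ((n : ℝ) + 1) * Real.sin (k * Real.pi / (2 * (n + 1)))) ≤
      (1 / 2) * (1 + Real.log n) :=
  coupling_sum_bound_general n r
end

section
/- Let H be a real number (the eigenvalue shift bound): if λ : [0,1] → ℝ is differentiable and satisfies −v(1 + λ(ε)) ≤ (1 − vε) λ'(ε) and (1 + vε) λ'(ε) ≤ v(1 + λ(ε)) for all ε ∈ [0,1], where 0 ≤ v < 1 and 1 + λ(0) ≥ 0, then |λ(1) − λ(0)| ≤ v(1 + λ(0)). -/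
open Set

/-! The two differential inequalities say exactly that `(1 + λ ε) / (1 + v ε)` is antitone and
`(1 + λ ε) / (1 - v ε)` is monotone on `[0, 1]`: the comparison solutions `(1 ∓ v ε)(1 + λ 0)`
are the curves on which these quotients are constant. Comparing their values at `ε = 0` and `ε = 1`
gives `(1 - v)(1 + λ 0) ≤ 1 + λ 1 ≤ (1 + v)(1 + λ 0)`. -/

theorem antitoneOn_div_of_deriv_mul_le {D : Set ℝ} (hD : Convex ℝ D) {f f' g g' : ℝ → ℝ}
    (hf : ∀ x ∈ D, HasDerivAt f (f' x) x) (hg : ∀ x ∈ D, HasDerivAt g (g' x) x)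
    (hg₀ : ∀ x ∈ D, 0 < g x) (hle : ∀ x ∈ interior D, f' x * g x ≤ f x * g' x) :
    AntitoneOn (fun x => f x / g x) D := by
  have hquot : ∀ x ∈ D, HasDerivAt (fun x => f x / g x)
      ((f' x * g x - f x * g' x) / g x ^ 2) x :=
    fun x hx => (hf x hx).div (hg x hx) (hg₀ x hx).ne'
  refine antitoneOn_of_hasDerivWithinAt_nonpos hD
    (fun x hx => (hquot x hx).continuousAt.continuousWithinAt)
    (fun x hx => (hquot x (interior_subset hx)).hasDerivWithinAt) fun x hx => ?_
  exact div_nonpos_of_nonpos_of_nonneg (sub_nonpos.2 (hle x hx)) (sq_nonneg _)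

theorem monotoneOn_div_of_mul_le_deriv {D : Set ℝ} (hD : Convex ℝ D) {f f' g g' : ℝ → ℝ}
    (hf : ∀ x ∈ D, HasDerivAt f (f' x) x) (hg : ∀ x ∈ D, HasDerivAt g (g' x) x)
    (hg₀ : ∀ x ∈ D, 0 < g x) (hle : ∀ x ∈ interior D, f x * g' x ≤ f' x * g x) :
    MonotoneOn (fun x => f x / g x) D := by
  have hanti := antitoneOn_div_of_deriv_mul_le hD (fun x hx => (hf x hx).neg) hg hg₀
    fun x hx => by simpa only [Pi.neg_apply, neg_mul, neg_le_neg_iff] using hle x hx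
  intro x hx y hy hxy
  simpa only [Pi.neg_apply, neg_div, neg_le_neg_iff] using hanti hx hy hxy

theorem eigenvalue_shift_general (v : ℝ) (hv0 : 0 ≤ v) (hv1 : v < 1)
    (lam lam' : ℝ → ℝ)
    (hderiv : ∀ ε ∈ Set.Icc (0 : ℝ) 1, HasDerivAt lam (lam' ε) ε)
    (hlow : ∀ ε ∈ Set.Icc (0 : ℝ) 1, -v * (1 + lam ε) ≤ (1 - v * ε) * lam' ε)
    (hup : ∀ ε ∈ Set.Icc (0 : ℝ) 1, (1 + v * ε) * lam' ε ≤ v * (1 + lam ε)) :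
    |lam 1 - lam 0| ≤ v * (1 + lam 0) := by
  have hshift : ∀ ε ∈ Icc (0 : ℝ) 1, HasDerivAt (fun x => 1 + lam x) (lam' ε) ε :=
    fun ε hε => (hderiv ε hε).const_add 1
  have hlin (c : ℝ) (ε : ℝ) : HasDerivAt (fun x => 1 + c * x) c ε := by
    simpa using ((hasDerivAt_id ε).const_mul c).const_add 1
  have hpos : ∀ ε ∈ Icc (0 : ℝ) 1, 0 < 1 + v * ε ∧ 0 < 1 + -v * ε := fun ε ⟨h0, h1⟩ =>
    ⟨by nlinarith, by nlinarith⟩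
  have hanti : AntitoneOn (fun ε => (1 + lam ε) / (1 + v * ε)) (Icc 0 1) :=
    antitoneOn_div_of_deriv_mul_le (convex_Icc 0 1) hshift (fun ε _ => hlin v ε)
      (fun ε hε => (hpos ε hε).1) fun ε hε => by
        linarith [hup ε (interior_subset hε)]
  have hmono : MonotoneOn (fun ε => (1 + lam ε) / (1 + -v * ε)) (Icc 0 1) :=
    monotoneOn_div_of_mul_le_deriv (convex_Icc 0 1) hshift (fun ε _ => hlin (-v) ε)
      (fun ε hε => (hpos ε hε).2) fun ε hε => by
        linarith [hlow ε (interior_subset hε)]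
  have hupper := hanti (left_mem_Icc.2 zero_le_one) (right_mem_Icc.2 zero_le_one) zero_le_one
  have hlower := hmono (left_mem_Icc.2 zero_le_one) (right_mem_Icc.2 zero_le_one) zero_le_one
  simp only [mul_zero, add_zero, div_one, mul_one] at hupper hlower
  rw [div_le_iff₀ (by linarith)] at hupper
  rw [le_div_iff₀ (by linarith)] at hlower
  rw [abs_le]
  constructor <;> linarith

/-- Eigenvalue shift under perturbation: if `λ` is differentiable on `[0,1]` with
`−v(1+λ(ε)) ≤ (1−vε)λ'(ε)` and `(1+vε)λ'(ε) ≤ v(1+λ(ε))` for `0 ≤ v < 1`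
and `1 + λ(0) ≥ 0`, then `|λ(1) − λ(0)| ≤ v(1 + λ(0))`. -/
theorem eigenvalue_shift (v : ℝ) (hv0 : 0 ≤ v) (hv1 : v < 1)
    (lam lam' : ℝ → ℝ)
    (hderiv : ∀ ε ∈ Set.Icc (0 : ℝ) 1, HasDerivAt lam (lam' ε) ε)
    (h0 : 0 ≤ 1 + lam 0)
    (hlow : ∀ ε ∈ Set.Icc (0 : ℝ) 1, -v * (1 + lam ε) ≤ (1 - v * ε) * lam' ε)
    (hup : ∀ ε ∈ Set.Icc (0 : ℝ) 1, (1 + v * ε) * lam' ε ≤ v * (1 + lam ε)) :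
    |lam 1 - lam 0| ≤ v * (1 + lam 0) :=
  eigenvalue_shift_general v hv0 hv1 lam lam' hderiv hlow hup
end
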